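/- arXiv:2605.20958 — 6 statements merged into one kernel-verified Lean document; each statement's English description precedes it below -/
import Mathlib

section
/- Let p₀, p₁, p₂ be real numbers with p₀ > 0, p₁ ≥ 0, p₂ ≥ 0 and p₀ + p₁ + p₂ = 1. Define sequences u₀^{(N)}, u₁^{(N)}, u₂^{(N)} of reals by u_n^{(0)} = p_n for n ∈ {0,1,2} and u_n^{(N+1)} = u_n^{(N)} p_n / (u₀^{(N)} p₀ + u₁^{(N)} p₁ + u₂^{(N)} p₂). Then the denominators are strictly positive for every N, and for all N and all n ∈ {0,1,2} one has u_n^{(N)} = p_n^{N+1} / (p₀^{N+1} + p₁^{N+1} + p₂^{N+1}). -/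
/-! Each round multiplies the distribution pointwise by `p` and renormalizes. Since
renormalizing commutes with pointwise multiplication, after `N` rounds the distribution is
the normalization of `p ^ (N + 1)`; the denominators are then ratios of positive power sums. -/

open Finset

section
variable {ι : Type*} [Fintype ι] {p : ι → ℝ}

lemma sum_pow_pos (hp : ∀ i, 0 ≤ p i) {i₀ : ι} (hi₀ : 0 < p i₀) (k : ℕ) :
    0 < ∑ i, p i ^ k :=
  sum_pos' (fun i _ => pow_nonneg (hp i) k) ⟨i₀, mem_univ _, pow_pos hi₀ k⟩

lemma sum_pow_div_sum_pow_mul (k : ℕ) :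
    ∑ i, p i ^ k / (∑ j, p j ^ k) * p i = (∑ i, p i ^ (k + 1)) / ∑ i, p i ^ k := by
  simp only [div_mul_eq_mul_div, ← pow_succ, sum_div]

lemma pow_div_sum_pow_mul_div {k : ℕ} (hk : ∑ j, p j ^ k ≠ 0) (i : ι) :
    p i ^ k / (∑ j, p j ^ k) * p i / ((∑ j, p j ^ (k + 1)) / ∑ j, p j ^ k) =
      p i ^ (k + 1) / ∑ j, p j ^ (k + 1) := by
  rw [div_mul_eq_mul_div, ← pow_succ, div_div_div_cancel_right₀ hk]

theorem eq_pow_div_sum_pow_of_normalized_recurrence (hp : ∀ i, 0 ≤ p i) {i₀ : ι}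
    (hi₀ : 0 < p i₀) (hsum : ∑ i, p i = 1) {u : ℕ → ι → ℝ} (h0 : u 0 = p)
    (hrec : ∀ N i, u (N + 1) i = u N i * p i / ∑ j, u N j * p j) (N : ℕ) (i : ι) :
    u N i = p i ^ (N + 1) / ∑ j, p j ^ (N + 1) := by
  induction N generalizing i with
  | zero => simp [h0, hsum]
  | succ N ih =>
    simp only [hrec, ih, sum_pow_div_sum_pow_mul]
    exact pow_div_sum_pow_mul_div (sum_pow_pos hp hi₀ _).ne' i

theorem sum_mul_pos_of_eq_pow_div_sum_pow (hp : ∀ i, 0 ≤ p i) {i₀ : ι} (hi₀ : 0 < p i₀)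
    {u : ℕ → ι → ℝ} (hu : ∀ N i, u N i = p i ^ (N + 1) / ∑ j, p j ^ (N + 1)) (N : ℕ) :
    0 < ∑ j, u N j * p j := by
  simp only [hu, sum_pow_div_sum_pow_mul]
  exact div_pos (sum_pow_pos hp hi₀ _) (sum_pow_pos hp hi₀ _)

end

/-- Closed form (proved by induction in Proposition 3.1) for the marginal error
probabilities after `N` successful rounds of the single-carrier qutrit protocol:
the normalized post-selection recurrence has positive denominators and satisfies
`u_n^{(N)} = p_n^{N+1} / (p₀^{N+1} + p₁^{N+1} + p₂^{N+1})`. -/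
theorem single_carrier_closed_form
    (p₀ p₁ p₂ : ℝ) (h₀ : 0 < p₀) (h₁ : 0 ≤ p₁) (h₂ : 0 ≤ p₂)
    (hsum : p₀ + p₁ + p₂ = 1)
    (u₀ u₁ u₂ : ℕ → ℝ)
    (hu₀0 : u₀ 0 = p₀) (hu₁0 : u₁ 0 = p₁) (hu₂0 : u₂ 0 = p₂)
    (hrec₀ : ∀ N, u₀ (N + 1) = u₀ N * p₀ / (u₀ N * p₀ + u₁ N * p₁ + u₂ N * p₂))
    (hrec₁ : ∀ N, u₁ (N + 1) = u₁ N * p₁ / (u₀ N * p₀ + u₁ N * p₁ + u₂ N * p₂))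
    (hrec₂ : ∀ N, u₂ (N + 1) = u₂ N * p₂ / (u₀ N * p₀ + u₁ N * p₁ + u₂ N * p₂)) :
    (∀ N, 0 < u₀ N * p₀ + u₁ N * p₁ + u₂ N * p₂) ∧
    (∀ N, u₀ N = p₀ ^ (N + 1) / (p₀ ^ (N + 1) + p₁ ^ (N + 1) + p₂ ^ (N + 1)) ∧
          u₁ N = p₁ ^ (N + 1) / (p₀ ^ (N + 1) + p₁ ^ (N + 1) + p₂ ^ (N + 1)) ∧
          u₂ N = p₂ ^ (N + 1) / (p₀ ^ (N + 1) + p₁ ^ (N + 1) + p₂ ^ (N + 1))) := by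
  set p : Fin 3 → ℝ := ![p₀, p₁, p₂]
  set u : ℕ → Fin 3 → ℝ := fun N => ![u₀ N, u₁ N, u₂ N]
  have hp : ∀ i, 0 ≤ p i := by
    intro i; fin_cases i <;> simp [p, h₀.le, h₁, h₂]
  have hsum' : ∑ i, p i = 1 := by simp [p, Fin.sum_univ_three, hsum]
  have h0 : u 0 = p := by ext i; fin_cases i <;> simp [u, p, hu₀0, hu₁0, hu₂0]
  have hrec : ∀ N i, u (N + 1) i = u N i * p i / ∑ j, u N j * p j := by
    intro N i; fin_cases i <;> simp [u, p, Fin.sum_univ_three, hrec₀, hrec₁, hrec₂]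
  have hclosed := eq_pow_div_sum_pow_of_normalized_recurrence (i₀ := 0) hp h₀ hsum' h0 hrec
  have hdenom := sum_mul_pos_of_eq_pow_div_sum_pow (i₀ := 0) hp h₀ hclosed
  simp only [Fin.sum_univ_three] at hclosed hdenom
  exact ⟨hdenom, fun N => ⟨hclosed N 0, hclosed N 1, hclosed N 2⟩⟩
end

section
/- Let d be a prime and let p : (ZMod d) × (ZMod d) → ℝ be nonnegative with Σ_{n,m} p(n,m) = 1 and p(0,0) > 1/d. Define L_∞ = Σ_{k ∈ ZMod d} p(0,k) and, for each a ∈ ZMod d, L_a = Σ_{k ∈ ZMod d} p(k, a·k). Then the sum of these d+1 quantities equals d·p(0,0) + 1 > 2, and consequently max{L_∞, L_0, …, L_{d−1}} > 2/(d+1). -/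
/-- Lemma 5.2: for prime `d` and a two-qudit Bell-diagonal distribution `p` on
`ZMod d × ZMod d` with `p(0,0) > 1/d`, the `d+1` MUB line sums
`L_∞ = Σ_k p(0,k)` and `L_a = Σ_k p(k, a·k)` add up to `d·p(0,0) + 1 > 2`,
and hence their maximum exceeds `2/(d+1)`. -/
theorem qudit_mub_line_sums
    (d : ℕ) (hd : d.Prime) [NeZero d]
    (p : ZMod d × ZMod d → ℝ) (hp : ∀ x, 0 ≤ p x)
    (hsum : ∑ x : ZMod d × ZMod d, p x = 1)
    (hfid : p (0, 0) > 1 / d) :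
    ((∑ k : ZMod d, p (0, k)) + ∑ a : ZMod d, ∑ k : ZMod d, p (k, a * k)
        = d * p (0, 0) + 1) ∧
    ((d : ℝ) * p (0, 0) + 1 > 2) ∧
    ((∑ k : ZMod d, p (0, k)) > 2 / (d + 1) ∨
      ∃ a : ZMod d, (∑ k : ZMod d, p (k, a * k)) > 2 / (d + 1)) := by
  haveI := Fact.mk hd
  have hd0 : (0:ℝ) < d := by exact_mod_cast hd.pos
  have key : (∑ k : ZMod d, p (0, k)) + ∑ a : ZMod d, ∑ k : ZMod d, p (k, a * k)
      = d * p (0, 0) + 1 := by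
    have h1 : ∑ a : ZMod d, ∑ k : ZMod d, p (k, a * k)
        = ∑ k : ZMod d, ∑ a : ZMod d, p (k, a * k) := Finset.sum_comm
    have h2 : ∀ k : ZMod d, k ≠ 0 →
        (∑ a : ZMod d, p (k, a * k)) = ∑ m : ZMod d, p (k, m) := by
      intro k hk
      exact Fintype.sum_equiv (Equiv.mulRight₀ k hk) _ _ (fun a => rfl)
    have h0 : (∑ a : ZMod d, p (0, a * 0)) = d * p (0, 0) := by
      simp [Finset.sum_const, Finset.card_univ, ZMod.card, nsmul_eq_mul]
    have hsplit : (∑ k : ZMod d, ∑ a : ZMod d, p (k, a * k))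
        = d * p (0, 0) + ∑ k ∈ Finset.univ.erase (0 : ZMod d), ∑ m : ZMod d, p (k, m) := by
      rw [← Finset.add_sum_erase _ _ (Finset.mem_univ (0 : ZMod d)), h0]
      congr 1
      exact Finset.sum_congr rfl (fun k hk => h2 k (Finset.ne_of_mem_erase hk))
    have htot : (∑ k : ZMod d, p (0, k))
        + ∑ k ∈ Finset.univ.erase (0 : ZMod d), ∑ m : ZMod d, p (k, m) = 1 := by
      rw [← hsum, Fintype.sum_prod_type]
      rw [← Finset.add_sum_erase _ (fun k => ∑ m : ZMod d, p (k, m))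
        (Finset.mem_univ (0 : ZMod d))]
    rw [h1, hsplit]
    linarith
  have h2 : (d : ℝ) * p (0, 0) + 1 > 2 := by
    have : (d : ℝ) * (1 / d) < d * p (0, 0) := by
      exact (mul_lt_mul_iff_right₀ hd0).mpr hfid
    rw [mul_one_div, div_self (ne_of_gt hd0)] at this
    linarith
  refine ⟨key, h2, ?_⟩
  by_contra h
  push_neg at h
  obtain ⟨hL, hLa⟩ := h
  have hsum_le : (∑ a : ZMod d, ∑ k : ZMod d, p (k, a * k)) ≤ d * (2 / (d + 1)) := by
    calc (∑ a : ZMod d, ∑ k : ZMod d, p (k, a * k))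
        ≤ ∑ _a : ZMod d, (2 / ((d : ℝ) + 1)) := Finset.sum_le_sum (fun a _ => hLa a)
      _ = d * (2 / (d + 1)) := by
          simp [Finset.sum_const, Finset.card_univ, ZMod.card, nsmul_eq_mul]
  have harith : 2 / ((d : ℝ) + 1) + d * (2 / (d + 1)) = 2 := by
    field_simp
    ring
  linarith
end

section
/- Let F be a finite field with card F = d, and let p : F × F → ℝ be nonnegative with Σ_{n,m} p(n,m) = 1 and p(0,0) > (d−1)/(2d). Define L_∞ = Σ_{k ∈ F} p(0,k) and, for each a ∈ F, L_a = Σ_{k ∈ F} p(k, a·k). Then max{L_∞} ∪ {L_a : a ∈ F} > 1/2. -/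
/-- Theorem 5.3: for a finite field `F` with `d` elements and a two-qudit
Bell-diagonal distribution `p` on `F × F` with `p(0,0) > (d−1)/(2d)`, the
maximum of the `d+1` MUB line sums `L_∞ = Σ_k p(0,k)` and
`L_a = Σ_k p(k, a·k)` exceeds `1/2` (spectral dominance). -/
theorem prime_power_mub_dominance
    (F : Type*) [Field F] [Fintype F] (d : ℕ) (hcard : Fintype.card F = d)
    (p : F × F → ℝ) (hp : ∀ x, 0 ≤ p x)
    (hsum : ∑ x : F × F, p x = 1)
    (hfid : p (0, 0) > ((d : ℝ) - 1) / (2 * d)) :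
    ((∑ k : F, p (0, k)) > 1 / 2) ∨ ∃ a : F, (∑ k : F, p (k, a * k)) > 1 / 2 := by
  by_contra hcon
  push_neg at hcon
  obtain ⟨hinf, ha⟩ := hcon
  classical
  have hd : 0 < d := hcard ▸ Fintype.card_pos
  have hdR : (0:ℝ) < d := by exact_mod_cast hd
  -- key identity: sum over all lines
  have key : (∑ k : F, p (0, k)) + ∑ a : F, ∑ k : F, p (k, a * k)
      = (d : ℝ) * p (0, 0) + 1 := by
    have swap : ∑ a : F, ∑ k : F, p (k, a * k)
        = ∑ k : F, ∑ a : F, p (k, a * k) := Finset.sum_comm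
    have inner : ∀ k : F, ∑ a : F, p (k, a * k)
        = if k = 0 then (d : ℝ) * p (0, 0) else ∑ m : F, p (k, m) := by
      intro k
      by_cases hk : k = 0
      · simp [hk, Finset.sum_const, Finset.card_univ, hcard, mul_comm]
      · rw [if_neg hk]
        exact Fintype.sum_equiv (Equiv.mulRight₀ k hk) _ _ (fun a => rfl)
    have h3 : (∑ k : F, if k = 0 then (d : ℝ) * p (0, 0) else ∑ m : F, p (k, m))
        = (d : ℝ) * p (0, 0) + ∑ k ∈ Finset.univ.erase (0:F), ∑ m : F, p (k, m) := by
      rw [← Finset.add_sum_erase _ _ (Finset.mem_univ (0 : F)), if_pos rfl]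
      exact congrArg _ (Finset.sum_congr rfl fun k hk =>
        if_neg (Finset.ne_of_mem_erase hk))
    rw [swap, Finset.sum_congr rfl (fun k _ => inner k), h3]
    have hsum' : ∑ n : F, ∑ m : F, p (n, m) = 1 := by
      rw [← Fintype.sum_prod_type]; exact hsum
    rw [← Finset.add_sum_erase _ (fun n => ∑ m : F, p (n, m))
      (Finset.mem_univ (0 : F))] at hsum'
    linarith
  have hbound : ∑ a : F, ∑ k : F, p (k, a * k) ≤ (d : ℝ) * (1 / 2) := by
    have h := Finset.sum_le_sum (fun a (_ : a ∈ Finset.univ) => ha a)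
    simpa [Finset.sum_const, Finset.card_univ, hcard, nsmul_eq_mul] using h
  have hfid' : ((d:ℝ) - 1) / 2 < (d : ℝ) * p (0, 0) := by
    have h := (div_lt_iff₀ (by positivity : (0:ℝ) < 2 * d)).mp hfid
    nlinarith
  linarith
end

section
/- Fix an integer m ≥ 1 and a real p. Define P : (ZMod 3) × (ZMod 3) → ℝ by P(0,0) = p and P(i,j) = (1−p)/8 for (i,j) ≠ (0,0), and let r : (ZMod 3) × (ZMod 3) → ℝ satisfy Σ_{i,j} r(i,j) = 1. Set R₀ = Σ_{j} r(0,j), A_m = ((3p+1)/4)^m, B_m = ((9p−1)/8)^m, C_m = (3(1−p)/8)^m. Then the sum, over all tuples ((x₀,z₀),(x₁,z₁),…,(x_m,z_m)) ∈ ((ZMod 3) × (ZMod 3))^{m+1} satisfying z₁ = z₂ = ⋯ = z_m and x₀ + x₁ + ⋯ + x_m = 0 in ZMod 3, of r(x₀,z₀)·∏_{k=1}^m P(x_k,z_k), equals (1/3)·[A_m + (3R₀ − 1)·B_m + 2·C_m]. -/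
/-!
Split an error configuration into the preprocessed pair `(x₀, z₀)`, the common phase error `z`
of the carriers and their shift errors `x₁, …, x_m`. For fixed `z` the weight of the shift
errors summing to `s` is the `m`-fold additive convolution power of `x ↦ P (x, z)` at `s`.
On a finite abelian group of order `n`, such a power of a function `g` that equals `c` off `0`
obeys `g^{*(m+1)}(s) = (g 0 - c) g^{*m}(s) + c (∑ g)^m`, which solves to
`((∑ g)^m + (n [s = 0] - 1) (g 0 - c)^m) / n`. For `z = 0` this gives the `A_m` and `B_m` terms,
for the two `z ≠ 0` the `C_m` term, and summing against `r` produces `R₀`.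
-/

open Finset

section ConvPow

variable {G : Type*} [AddCommGroup G] [Fintype G] [DecidableEq G]

noncomputable def convPow (g : G → ℝ) (m : ℕ) (s : G) : ℝ :=
  ∑ x : Fin m → G with ∑ k, x k = s, ∏ k, g (x k)

variable (g : G → ℝ)

lemma convPow_zero (s : G) : convPow g 0 s = if s = 0 then 1 else 0 := by
  split_ifs with h <;> simp [convPow, h, eq_comm (a := (0 : G))]

lemma convPow_succ (m : ℕ) (s : G) :
    convPow g (m + 1) s = ∑ a, g a * convPow g m (s - a) := by
  simp only [convPow, sum_filter, mul_sum]
  rw [← (Fin.consEquiv fun _ => G).sum_comp, Fintype.sum_prod_type]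
  simp only [Fin.consEquiv_apply, Fin.sum_univ_succ, Fin.prod_univ_succ, Fin.cons_zero,
    Fin.cons_succ, eq_sub_iff_add_eq', mul_ite, mul_zero]

lemma sum_convPow (m : ℕ) : ∑ s, convPow g m s = (∑ a, g a) ^ m := by
  simp only [convPow]
  rw [sum_fiberwise, sum_pow', Fintype.piFinset_univ]

variable {g} {c : ℝ} (hc : ∀ a ≠ 0, g a = c)
include hc

lemma sum_eq_of_eq_const : ∑ a, g a = g 0 + (Fintype.card G - 1) * c := by
  rw [Fintype.sum_eq_add_sum_compl 0, sum_congr rfl fun a ha => hc a (by simpa using ha),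
    sum_const, card_compl, card_singleton, nsmul_eq_mul, Nat.cast_sub Fintype.card_pos]
  simp

lemma convPow_succ_of_eq_const (m : ℕ) (s : G) :
    convPow g (m + 1) s = (g 0 - c) * convPow g m s + c * (∑ a, g a) ^ m := by
  have hg (a : G) : g a * convPow g m (s - a) =
      (g 0 - c) * (if a = 0 then convPow g m (s - a) else 0) + c * convPow g m (s - a) := by
    split_ifs with h
    · subst h; ring
    · simp [h, hc]
  have hshift : ∑ a, convPow g m (s - a) = ∑ a, convPow g m a :=
    (Equiv.subLeft s).sum_comp _
  rw [convPow_succ, sum_congr rfl fun a _ => hg a, sum_add_distrib, ← mul_sum, ← mul_sum,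
    sum_ite_eq', if_pos (mem_univ _), sub_zero, hshift, sum_convPow]

lemma convPow_eq_of_eq_const (m : ℕ) (s : G) :
    convPow g m s = ((g 0 + (Fintype.card G - 1) * c) ^ m
      + ((if s = 0 then (Fintype.card G : ℝ) else 0) - 1) * (g 0 - c) ^ m)
        / Fintype.card G := by
  have hcard : (Fintype.card G : ℝ) ≠ 0 := by positivity
  induction m with
  | zero => rw [convPow_zero]; split_ifs <;> field_simp <;> ring
  | succ m ih =>
    rw [convPow_succ_of_eq_const hc, ih, sum_eq_of_eq_const hc]
    field_simp
    ring

end ConvPow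

lemma sum_filter_const_eq {ι α M : Type*} [Fintype ι] [DecidableEq ι] [Nonempty ι] [Fintype α]
    [DecidableEq α] [DecidablePred fun y : ι → α => ∀ i j, y i = y j] [AddCommMonoid M] (F : (ι → α) → M) :
    ∑ y : ι → α with ∀ i j, y i = y j, F y = ∑ z, F (fun _ => z) := by
  have hconst : ({y : ι → α | ∀ i j, y i = y j} : Finset _) = univ.image (Function.const ι) := by
    ext y
    simp only [mem_filter, mem_univ, true_and, mem_image]
    refine ⟨fun h => ?_, ?_⟩
    · obtain ⟨i⟩ := ‹Nonempty ι›
      exact ⟨y i, funext fun j => h i j⟩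
    · rintro ⟨z, rfl⟩ i j
      rfl
  rw [hconst, sum_image fun _ _ _ _ h => Function.const_injective h]
  rfl

lemma sum_ite_fst_eq {α β M : Type*} [Fintype α] [DecidableEq α] [Fintype β] [AddCommMonoid M]
    (r : α × β → M) (a : α) : ∑ e, (if e.1 = a then r e else 0) = ∑ b, r (a, b) := by
  rw [Fintype.sum_prod_type, Fintype.sum_eq_single a fun b hb => by simp [hb]]
  simp

section Syndrome

variable {G β γ : Type*} [AddCommGroup G] [Fintype G] [DecidableEq G] [Fintype β] [DecidableEq β]
  [Fintype γ]

lemma sum_syndrome_eq_sum_convPow {m : ℕ} (hm : 1 ≤ m) (a : G) (f : G × β → ℝ) :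
    ∑ v : Fin m → G × β with (∀ i j, (v i).2 = (v j).2) ∧ a + ∑ k, (v k).1 = 0, ∏ k, f (v k)
      = ∑ z, convPow (fun x => f (x, z)) m (-a) := by
  have : Nonempty (Fin m) := ⟨⟨0, hm⟩⟩
  rw [sum_filter]
  refine (Fintype.sum_equiv (Equiv.arrowProdEquivProdArrow (Fin m) (fun _ => G) (fun _ => β)) _
    (fun p => if (∀ i j, p.2 i = p.2 j) ∧ a + ∑ k, p.1 k = 0 then ∏ k, f (p.1 k, p.2 k) else 0)
    fun _ => rfl).trans ?_
  rw [Fintype.sum_prod_type, sum_comm]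
  simp only [ite_and, ← ite_sum_zero, ← sum_filter]
  rw [sum_filter_const_eq]
  simp only [convPow, add_eq_zero_iff_eq_neg']

lemma sum_filter_syndrome_eq_sum_convPow {m : ℕ} (hm : 1 ≤ m) (r : G × γ → ℝ)
    (f : G × β → ℝ) :
    ∑ e ∈ univ.filter (fun e : (G × γ) × (Fin m → G × β) =>
          (∀ i j, (e.2 i).2 = (e.2 j).2) ∧ e.1.1 + ∑ k, (e.2 k).1 = 0),
        r e.1 * ∏ k, f (e.2 k)
      = ∑ e₀, r e₀ * ∑ z, convPow (fun x => f (x, z)) m (-e₀.1) := by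
  rw [sum_filter, Fintype.sum_prod_type]
  refine sum_congr rfl fun e₀ _ => ?_
  rw [← sum_syndrome_eq_sum_convPow hm, mul_sum, sum_filter]

end Syndrome

lemma sum_convPow_qutrit {p : ℝ} {P : ZMod 3 × ZMod 3 → ℝ} (hP0 : P (0, 0) = p)
    (hP : ∀ x ≠ (0, 0), P x = (1 - p) / 8) {m : ℕ} (hm : 1 ≤ m) (s : ZMod 3) :
    ∑ z, convPow (fun x => P (x, z)) m s = (((3 * p + 1) / 4) ^ m
      + ((if s = 0 then 3 else 0) - 1) * ((9 * p - 1) / 8) ^ m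
      + 2 * ((3 * (1 - p)) / 8) ^ m) / 3 := by
  have hz0 : convPow (fun x => P (x, 0)) m s
      = (((3 * p + 1) / 4) ^ m + ((if s = 0 then 3 else 0) - 1) * ((9 * p - 1) / 8) ^ m) / 3 := by
    rw [convPow_eq_of_eq_const fun a ha => hP _ (by simpa using ha), ZMod.card, hP0]
    push_cast
    ring_nf
  have hz_ne (z : ZMod 3) (hz : z ≠ 0) :
      convPow (fun x => P (x, z)) m s = ((3 * (1 - p)) / 8) ^ m / 3 := by
    rw [convPow_eq_of_eq_const fun a ha => hP _ (by simp [hz]), ZMod.card,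
      hP _ (by simp [hz]), sub_self, zero_pow (by omega)]
    push_cast
    ring_nf
  rw [Fintype.sum_eq_add_sum_compl 0, hz0, sum_congr rfl fun z hz => hz_ne z (by simpa using hz),
    sum_const, card_compl, card_singleton, ZMod.card]
  norm_num
  ring

/-- Appendix A: exact success probability of the `m`-carrier qutrit purification
round with star stabilizer generators.  The sum over error configurations
`((x₀,z₀),(x₁,z₁),…,(x_m,z_m))` satisfying the syndrome-success conditions
`z₁ = ⋯ = z_m` and `x₀ + x₁ + ⋯ + x_m = 0 (mod 3)` of
`r(x₀,z₀) · ∏_k P(x_k,z_k)` equals `(1/3)[A_m + (3R₀−1)B_m + 2C_m]`. -/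
theorem mcaepp_success_probability (m : ℕ) (hm : 1 ≤ m) (p : ℝ)
    (P : ZMod 3 × ZMod 3 → ℝ)
    (hP0 : P (0, 0) = p) (hP : ∀ x : ZMod 3 × ZMod 3, x ≠ (0, 0) → P x = (1 - p) / 8)
    (r : ZMod 3 × ZMod 3 → ℝ) (hr : ∑ x : ZMod 3 × ZMod 3, r x = 1) :
    ∑ e ∈ Finset.univ.filter
        (fun e : (ZMod 3 × ZMod 3) × (Fin m → ZMod 3 × ZMod 3) =>
          (∀ i j : Fin m, (e.2 i).2 = (e.2 j).2) ∧
          e.1.1 + ∑ k : Fin m, (e.2 k).1 = 0),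
        r e.1 * ∏ k : Fin m, P (e.2 k)
      = (1 / 3) * (((3 * p + 1) / 4) ^ m
          + (3 * (∑ j : ZMod 3, r (0, j)) - 1) * ((9 * p - 1) / 8) ^ m
          + 2 * ((3 * (1 - p)) / 8) ^ m) := by
  set A := ((3 * p + 1) / 4) ^ m
  set B := ((9 * p - 1) / 8) ^ m
  set C := ((3 * (1 - p)) / 8) ^ m
  have hterm (e₀ : ZMod 3 × ZMod 3) :
      r e₀ * ∑ z, convPow (fun x => P (x, z)) m (-e₀.1)
        = (A - B + 2 * C) / 3 * r e₀ + B * (if e₀.1 = 0 then r e₀ else 0) := by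
    simp only [sum_convPow_qutrit hP0 hP hm, neg_eq_zero, A, B, C]
    split_ifs <;> ring
  rw [sum_filter_syndrome_eq_sum_convPow hm, sum_congr rfl fun e₀ _ => hterm e₀,
    sum_add_distrib, ← mul_sum, ← mul_sum, hr, sum_ite_fst_eq]
  ring
end

section
/- Fix an integer m ≥ 1 and a real p. Define P : (ZMod 3) × (ZMod 3) → ℝ by P(0,0) = p and P(i,j) = (1−p)/8 otherwise, let r : (ZMod 3) × (ZMod 3) → ℝ satisfy Σ_{i,j} r(i,j) = 1, and set A_m = ((3p+1)/4)^m, B_m = ((9p−1)/8)^m, C_m = (3(1−p)/8)^m. Then for every t ∈ ZMod 3, the sum, over all tuples ((x₀,z₀),(x₁,z₁),…,(x_m,z_m)) ∈ ((ZMod 3) × (ZMod 3))^{m+1} satisfying z₁ = z₂ = ⋯ = z_m, z₀ − z₁ = t, x₀ = 0, and x₁ + ⋯ + x_m = 0 in ZMod 3, of r(x₀,z₀)·∏_{k=1}^m P(x_k,z_k), equals (1/3)·[r(0,t)·(A_m + 2B_m) + (r(0,t+1) + r(0,t+2))·C_m]. -/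
/-!
Under the success conditions a configuration is determined by the common phase error `z` of the
carriers and their shift errors `x₁, …, x_m`, which must sum to zero; the shared pair then
contributes `r (0, t + z)`. For fixed `z`, the sum of `∏ₖ P (xₖ, z)` over such `x` is a coefficient
of the `m`-th convolution power of `g = P (·, z)` on `ZMod 3`. Because `g 1 = g 2`, the characters
of `ZMod 3` give it in closed form as `((g 0 + 2 g 1)^m + 2 (g 0 - g 1)^m) / 3`: this is
`(A_m + 2 B_m) / 3` for `z = 0` and `C_m / 3` for `z ≠ 0`, where `g 0 = g 1`.
-/

open Finset

theorem ZMod.three_cases (s : ZMod 3) : s = 0 ∨ s = 1 ∨ s = 2 := by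
  revert s; decide

theorem ZMod.sum_univ_three {M : Type*} [AddCommMonoid M] (f : ZMod 3 → M) :
    ∑ a, f a = f 0 + f 1 + f 2 :=
  Fin.sum_univ_three f

theorem sum_prod_fin_succ_of_sum_eq {G R : Type*} [AddCommGroup G] [Fintype G] [DecidableEq G]
    [CommSemiring R] (g : G → R) (m : ℕ) (s : G) :
    ∑ x : Fin (m + 1) → G with ∑ k, x k = s, ∏ k, g (x k) =
      ∑ a, g a * ∑ x : Fin m → G with ∑ k, x k = s - a, ∏ k, g (x k) := by
  rw [sum_filter, ← (Fin.consEquiv fun _ => G).sum_comp, Fintype.sum_prod_type]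
  refine Fintype.sum_congr _ _ fun a => ?_
  rw [sum_filter, mul_sum]
  refine Fintype.sum_congr _ _ fun x => ?_
  simp only [Fin.consEquiv_apply, Fin.sum_cons, Fin.prod_univ_succ, Fin.cons_zero,
    Fin.cons_succ, mul_ite, mul_zero, eq_sub_iff_add_eq']

theorem three_mul_sum_prod_zmod_three_of_sum_eq {R : Type*} [CommRing R] (g : ZMod 3 → R)
    (hg : g 2 = g 1) (m : ℕ) (s : ZMod 3) :
    3 * ∑ x : Fin m → ZMod 3 with ∑ k, x k = s, ∏ k, g (x k) =
      (g 0 + 2 * g 1) ^ m + (if s = 0 then 2 else -1) * (g 0 - g 1) ^ m := by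
  induction m generalizing s with
  | zero =>
    rw [sum_filter, Fintype.sum_unique]
    rcases ZMod.three_cases s with rfl | rfl | rfl <;> norm_num +decide
  | succ m ih =>
    rw [sum_prod_fin_succ_of_sum_eq, mul_sum]
    simp_rw [mul_left_comm (3 : R), ih]
    rw [ZMod.sum_univ_three, hg]
    rcases ZMod.three_cases s with rfl | rfl | rfl <;> simp +decide <;> ring

theorem eq_of_success_conditions {G : Type*} [AddCommGroup G] {m : ℕ} [NeZero m] {t : G}
    {e : (G × G) × (Fin m → G × G)} (hz : ∀ i j, (e.2 i).2 = (e.2 j).2)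
    (ht : ∀ i, e.1.2 - (e.2 i).2 = t) (hx : e.1.1 = 0) :
    e = ((0, t + (e.2 0).2), fun k => ((e.2 k).1, (e.2 0).2)) :=
  Prod.ext (Prod.ext hx (eq_add_of_sub_eq (ht 0))) (funext fun k => Prod.ext rfl (hz k 0))

theorem sum_filter_success_conditions_eq_sum_sum {G R : Type*} [AddCommGroup G] [Fintype G]
    [DecidableEq G] [AddCommMonoid R] {m : ℕ} [NeZero m] (t : G)
    (F : (G × G) × (Fin m → G × G) → R) :
    ∑ e ∈ univ.filter (fun e : (G × G) × (Fin m → G × G) =>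
        (∀ i j, (e.2 i).2 = (e.2 j).2) ∧ (∀ i, e.1.2 - (e.2 i).2 = t) ∧
        e.1.1 = 0 ∧ ∑ k, (e.2 k).1 = 0), F e =
      ∑ z, ∑ x : Fin m → G with ∑ k, x k = 0, F ((0, t + z), fun k => (x k, z)) := by
  rw [← sum_product']
  refine sum_nbij' (fun e => ((e.2 0).2, fun k => (e.2 k).1))
    (fun zx => ((0, t + zx.1), fun k => (zx.2 k, zx.1))) ?_ ?_ ?_ (fun _ _ => rfl) ?_
  · simp +contextual
  · simp +contextual
  · intro e he
    obtain ⟨hz, ht, hx, -⟩ := (mem_filter.mp he).2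
    exact (eq_of_success_conditions hz ht hx).symm
  · intro e he
    obtain ⟨hz, ht, hx, -⟩ := (mem_filter.mp he).2
    exact congrArg F (eq_of_success_conditions hz ht hx)

theorem mcaepp_joint_probability_s0_general (m : ℕ) (hm : 1 ≤ m) (p : ℝ)
    (P : ZMod 3 × ZMod 3 → ℝ)
    (hP0 : P (0, 0) = p) (hP : ∀ x : ZMod 3 × ZMod 3, x ≠ (0, 0) → P x = (1 - p) / 8)
    (r : ZMod 3 × ZMod 3 → ℝ)
    (t : ZMod 3) :
    ∑ e ∈ Finset.univ.filter
        (fun e : (ZMod 3 × ZMod 3) × (Fin m → ZMod 3 × ZMod 3) =>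
          (∀ i j : Fin m, (e.2 i).2 = (e.2 j).2) ∧
          (∀ i : Fin m, e.1.2 - (e.2 i).2 = t) ∧
          e.1.1 = 0 ∧
          ∑ k : Fin m, (e.2 k).1 = 0),
        r e.1 * ∏ k : Fin m, P (e.2 k)
      = (1 / 3) * (r (0, t) * (((3 * p + 1) / 4) ^ m + 2 * ((9 * p - 1) / 8) ^ m)
          + (r (0, t + 1) + r (0, t + 2)) * ((3 * (1 - p)) / 8) ^ m) := by
  have : NeZero m := ⟨by omega⟩
  have hS (z : ZMod 3) := three_mul_sum_prod_zmod_three_of_sum_eq (fun a => P (a, z))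
    ((hP (2, z) (by simp +decide)).trans (hP (1, z) (by simp +decide)).symm) m 0
  have h0 := hS 0
  have h1 := hS 1
  have h2 := hS 2
  rw [if_pos rfl, hP0, hP (1, 0) (by decide)] at h0
  rw [if_pos rfl, hP (0, 1) (by decide), hP (1, 1) (by decide), sub_self,
    zero_pow (NeZero.ne m)] at h1
  rw [if_pos rfl, hP (0, 2) (by decide), hP (1, 2) (by decide), sub_self,
    zero_pow (NeZero.ne m)] at h2
  rw [sum_filter_success_conditions_eq_sum_sum, ZMod.sum_univ_three]
  simp only [← mul_sum, add_zero]
  linear_combination (r (0, t) * h0 + r (0, t + 1) * h1 + r (0, t + 2) * h2) / 3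

/-- Appendix A: the unnormalized joint probability `E[δ_{0t}]` that an
`m`-carrier qutrit purification round succeeds with output Bell label `(0,t)`:
the sum over configurations with `z₁ = ⋯ = z_m`, `z₀ − z₁ = t`, `x₀ = 0` and
`x₁ + ⋯ + x_m = 0 (mod 3)` of `r(x₀,z₀)·∏_k P(x_k,z_k)` equals
`(1/3)[r(0,t)(A_m + 2B_m) + (r(0,t+1) + r(0,t+2))C_m]`. -/
theorem mcaepp_joint_probability_s0 (m : ℕ) (hm : 1 ≤ m) (p : ℝ)
    (P : ZMod 3 × ZMod 3 → ℝ)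
    (hP0 : P (0, 0) = p) (hP : ∀ x : ZMod 3 × ZMod 3, x ≠ (0, 0) → P x = (1 - p) / 8)
    (r : ZMod 3 × ZMod 3 → ℝ) (hr : ∑ x : ZMod 3 × ZMod 3, r x = 1)
    (t : ZMod 3) :
    ∑ e ∈ Finset.univ.filter
        (fun e : (ZMod 3 × ZMod 3) × (Fin m → ZMod 3 × ZMod 3) =>
          (∀ i j : Fin m, (e.2 i).2 = (e.2 j).2) ∧
          (∀ i : Fin m, e.1.2 - (e.2 i).2 = t) ∧
          e.1.1 = 0 ∧
          ∑ k : Fin m, (e.2 k).1 = 0),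
        r e.1 * ∏ k : Fin m, P (e.2 k)
      = (1 / 3) * (r (0, t) * (((3 * p + 1) / 4) ^ m + 2 * ((9 * p - 1) / 8) ^ m)
          + (r (0, t + 1) + r (0, t + 2)) * ((3 * (1 - p)) / 8) ^ m) :=
  mcaepp_joint_probability_s0_general m hm p P hP0 hP r t
end

section
/- Let d ≥ 2 be an integer, ω = exp(2πi/d), and let |Φ^{n,m}⟩ = (1/√d) Σ_{j=0}^{d−1} ω^{mj} |j⟩ ⊗ |(j+n) mod d⟩ for n, m ∈ ZMod d. Let p : (ZMod d) × (ZMod d) → ℝ be nonnegative with Σ_{n,m} p(n,m) = 1 and p(0,0) > 1/d, and let ρ = Σ_{n,m} p(n,m) |Φ^{n,m}⟩⟨Φ^{n,m}|, viewed as a matrix indexed by (Fin d) × (Fin d). Define the partial transpose ρ^{T_B} entrywise by (ρ^{T_B})_{(i,j),(k,l)} = ρ_{(i,l),(k,j)}. Then ρ^{T_B} is not positive semidefinite, i.e., there exists a vector v ∈ ℂ^{d·d} with ⟨v, ρ^{T_B} v⟩ having negative real part. -/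
/-!
Test the partial transpose against the antisymmetric vectors `e_(j,i) - e_(i,j)`. For any matrix
`A` on `ℂ^d ⊗ ℂ^d`, the quadratic forms of these vectors sum to `2 (tr A - tr (A F))`, `F` the flip.
For `A = ρ^{T_B}` one has `tr ρ^{T_B} = tr ρ = 1` and `tr (ρ^{T_B} F) = ∑ i j, ρ (i,i) (j,j)`, which
is `d ⟨Φ^{0,0}| ρ |Φ^{0,0}⟩ = d p(0,0)` because `∑ j, Φ^{n,m} (j,j)` vanishes for `(n,m) ≠ 0` by
orthogonality of characters of `ZMod d`. So the forms sum to `2 (1 - d p(0,0)) < 0`, and one of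
them is negative.
-/

open Matrix

namespace Matrix

variable {α β ι R : Type*}

def partialTranspose (A : Matrix (α × β) (α × β) R) : Matrix (α × β) (α × β) R :=
  fun x y => A (x.1, y.2) (y.1, x.2)

theorem trace_partialTranspose [Fintype α] [Fintype β] [AddCommMonoid R]
    (A : Matrix (α × β) (α × β) R) : A.partialTranspose.trace = A.trace := rfl

theorem partialTranspose_apply_swap (A : Matrix (ι × ι) (ι × ι) R) (x : ι × ι) :
    A.partialTranspose x x.swap = A (x.1, x.1) (x.2, x.2) := rfl

variable [Fintype ι] [DecidableEq ι] [CommRing R] [StarRing R]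

def antisymmVec (x : ι × ι) : ι × ι → R := Pi.single x.swap 1 - Pi.single x 1

theorem star_antisymmVec_dotProduct_mulVec (A : Matrix (ι × ι) (ι × ι) R) (x : ι × ι) :
    star (antisymmVec x) ⬝ᵥ A *ᵥ antisymmVec x =
      A x.swap x.swap - A x.swap x - A x x.swap + A x x := by
  simp only [antisymmVec, star_sub, Pi.star_single, star_one, mulVec_sub, mulVec_single,
    MulOpposite.op_one, one_smul, dotProduct_sub, sub_dotProduct, single_dotProduct, col_apply,
    one_mul]
  ring

theorem sum_star_antisymmVec_dotProduct_mulVec (A : Matrix (ι × ι) (ι × ι) R) :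
    ∑ x, star (antisymmVec x) ⬝ᵥ A *ᵥ antisymmVec x =
      2 * (A.trace - ∑ x : ι × ι, A x x.swap) := by
  have hswap (f : ι × ι → R) : ∑ x : ι × ι, f x.swap = ∑ x, f x :=
    Fintype.sum_equiv (Equiv.prodComm ι ι) _ _ fun _ => rfl
  have hdiag := hswap fun x => A x x
  have hcross : ∑ x : ι × ι, A x.swap x = ∑ x : ι × ι, A x x.swap := by
    simpa using hswap fun x => A x x.swap
  simp only [star_antisymmVec_dotProduct_mulVec, Finset.sum_add_distrib, Finset.sum_sub_distrib,
    hdiag, hcross, trace, diag]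
  ring

end Matrix

theorem IsPrimitiveRoot.sum_pow_val_mul_val_eq_zero {R : Type*} [CommRing R] [IsDomain R]
    {d : ℕ} [NeZero d] {ω : R} (hω : IsPrimitiveRoot ω d) {m : ZMod d} (hm : m ≠ 0) :
    ∑ j : ZMod d, ω ^ (m.val * j.val) = 0 := by
  have hprim := AddChar.zmodChar_primitive_of_primitive_root d hω hm
  refine Eq.trans (Finset.sum_congr rfl fun j _ => ?_) (AddChar.sum_eq_zero_of_ne_one hprim)
  rw [AddChar.mulShift_apply, ← AddChar.zmodChar_apply' hω.pow_eq_one]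
  simp

noncomputable def bellVec (d : ℕ) (ω : ℂ) (nm : ZMod d × ZMod d) : ZMod d × ZMod d → ℂ :=
  fun x => (1 / Real.sqrt d : ℝ) * (if x.2 = x.1 + nm.1 then ω ^ (nm.2.val * x.1.val) else 0)

section Bell

variable {d : ℕ} [NeZero d] {ω : ℂ}

theorem star_bellVec_dotProduct_self (hω : ‖ω‖ = 1) (nm : ZMod d × ZMod d) :
    star (bellVec d ω nm) ⬝ᵥ bellVec d ω nm = 1 := by
  have hd : (d : ℂ) ≠ 0 := Nat.cast_ne_zero.mpr (NeZero.ne d)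
  have hterm (x : ZMod d × ZMod d) : star (bellVec d ω nm x) * bellVec d ω nm x =
      if x.2 = x.1 + nm.1 then (d : ℂ)⁻¹ else 0 := by
    by_cases hx : x.2 = x.1 + nm.1
    · simp only [bellVec, hx, if_true, star_mul', Complex.star_def, Complex.conj_ofReal]
      rw [mul_mul_mul_comm, ← Complex.ofReal_mul, Complex.conj_mul', norm_pow, hω, one_pow,
        div_mul_div_comm, one_mul, Real.mul_self_sqrt (Nat.cast_nonneg d)]
      simp
    · simp [bellVec, hx]
  simp only [dotProduct, Pi.star_apply, hterm, Fintype.sum_prod_type, Finset.sum_ite_eq',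
    Finset.mem_univ, if_true, Finset.sum_const, Finset.card_univ, ZMod.card, nsmul_eq_mul]
  field_simp

theorem sum_bellVec_diag (hω : IsPrimitiveRoot ω d) (nm : ZMod d × ZMod d) :
    ∑ j, bellVec d ω nm (j, j) = if nm = 0 then (Real.sqrt d : ℂ) else 0 := by
  obtain ⟨n, m⟩ := nm
  simp only [bellVec, ← Finset.mul_sum, left_eq_add]
  by_cases hn : n = 0
  · by_cases hm : m = 0
    · simp only [hn, hm, ZMod.val_zero, zero_mul, pow_zero, if_true, Finset.sum_const,
        Finset.card_univ, ZMod.card, nsmul_eq_mul, mul_one, Prod.mk_zero_zero]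
      rw [← Complex.ofReal_natCast, ← Complex.ofReal_mul, one_div_mul_eq_div, Real.div_sqrt]
    · simp [hn, hm, hω.sum_pow_val_mul_val_eq_zero hm]
  · simp [hn]

end Bell

noncomputable def mixedState {κ n : Type*} [Fintype κ] (p : κ → ℝ) (φ : κ → n → ℂ) :
    Matrix n n ℂ :=
  fun x y => ∑ k, (p k : ℂ) * φ k x * starRingEnd ℂ (φ k y)

section MixedState

variable {κ ι n : Type*} [Fintype κ] [Fintype ι] [Fintype n] (p : κ → ℝ)

theorem trace_mixedState (φ : κ → n → ℂ) :
    (mixedState p φ).trace = ∑ k, (p k : ℂ) * (star (φ k) ⬝ᵥ φ k) := by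
  simp only [trace, diag, mixedState, dotProduct, Finset.mul_sum]
  rw [Finset.sum_comm]
  simp only [Pi.star_apply, Complex.star_def]
  congr! 2
  ring

theorem sum_mixedState_apply_diag_diag (φ : κ → ι × ι → ℂ) :
    ∑ x : ι × ι, mixedState p φ (x.1, x.1) (x.2, x.2) =
      ∑ k, (p k : ℂ) * ((∑ i, φ k (i, i)) * starRingEnd ℂ (∑ i, φ k (i, i))) := by
  simp only [map_sum, Finset.sum_mul_sum]
  simp only [mixedState, Finset.mul_sum, Fintype.sum_prod_type, mul_assoc]
  conv_rhs => rw [Finset.sum_comm]; enter [2, i]; rw [Finset.sum_comm]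

end MixedState

theorem bell_diagonal_npt_general (d : ℕ) [NeZero d]
    (p : ZMod d × ZMod d → ℝ)
    (hsum : ∑ x : ZMod d × ZMod d, p x = 1)
    (hfid : p (0, 0) > 1 / d) :
    let ω : ℂ := Complex.exp (2 * Real.pi * Complex.I / d)
    let Φ : ZMod d × ZMod d → ZMod d × ZMod d → ℂ := fun nm x =>
      (1 / Real.sqrt d : ℝ) * (if x.2 = x.1 + nm.1 then ω ^ (nm.2.val * x.1.val) else 0)
    let ρ : Matrix (ZMod d × ZMod d) (ZMod d × ZMod d) ℂ := fun x y =>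
      ∑ nm : ZMod d × ZMod d, (p nm : ℂ) * Φ nm x * (starRingEnd ℂ) (Φ nm y)
    let ρTB : Matrix (ZMod d × ZMod d) (ZMod d × ZMod d) ℂ := fun x y =>
      ρ (x.1, y.2) (y.1, x.2)
    ∃ v : ZMod d × ZMod d → ℂ, (star v ⬝ᵥ ρTB.mulVec v).re < 0 := by
  intro ω Φ ρ ρTB
  have hω : IsPrimitiveRoot ω d := Complex.isPrimitiveRoot_exp d (NeZero.ne d)
  have hρ : ρ = mixedState p (bellVec d ω) := rfl
  have htrace : ρ.trace = 1 := by
    simp only [hρ, trace_mixedState, star_bellVec_dotProduct_self (hω.norm'_eq_one (NeZero.ne d)),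
      mul_one]
    exact_mod_cast hsum
  have hfidelity : ∑ x : ZMod d × ZMod d, ρ (x.1, x.1) (x.2, x.2) = d * p 0 := by
    simp only [hρ, sum_mixedState_apply_diag_diag, sum_bellVec_diag hω, apply_ite (starRingEnd ℂ),
      Complex.conj_ofReal, map_zero, ite_mul, zero_mul, mul_ite, mul_zero, Finset.sum_ite_eq',
      Finset.mem_univ, if_true, ← Complex.ofReal_mul, Real.mul_self_sqrt (Nat.cast_nonneg d)]
    push_cast
    ring
  have hforms := sum_star_antisymmVec_dotProduct_mulVec ρ.partialTranspose
  simp only [trace_partialTranspose, partialTranspose_apply_swap, htrace, hfidelity] at hforms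
  have hdp : 1 < (d : ℝ) * p 0 := by
    rwa [Prod.mk_zero_zero, gt_iff_lt, div_lt_iff₀' (Nat.cast_pos.mpr (NeZero.pos d))] at hfid
  have hneg : ∑ x, (star (antisymmVec x) ⬝ᵥ ρ.partialTranspose *ᵥ antisymmVec x).re <
      ∑ _x : ZMod d × ZMod d, (0 : ℝ) := by
    rw [← Complex.re_sum, hforms, Finset.sum_const_zero]
    simpa using (by linarith : 2 * (1 - d * p 0) < 0)
  obtain ⟨x, -, hx⟩ := Finset.exists_lt_of_sum_lt hneg
  exact ⟨antisymmVec x, hx⟩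

/-- Section 2 distillability threshold: a two-qudit Bell-diagonal state with
entanglement fidelity `p(0,0) > 1/d` has non-positive partial transpose: there
is a vector `v` with `⟨v, ρ^{T_B} v⟩` of negative real part. -/
theorem bell_diagonal_npt (d : ℕ) (hd : 2 ≤ d) [NeZero d]
    (p : ZMod d × ZMod d → ℝ) (hp : ∀ x, 0 ≤ p x)
    (hsum : ∑ x : ZMod d × ZMod d, p x = 1)
    (hfid : p (0, 0) > 1 / d) :
    let ω : ℂ := Complex.exp (2 * Real.pi * Complex.I / d)
    let Φ : ZMod d × ZMod d → ZMod d × ZMod d → ℂ := fun nm x =>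
      (1 / Real.sqrt d : ℝ) * (if x.2 = x.1 + nm.1 then ω ^ (nm.2.val * x.1.val) else 0)
    let ρ : Matrix (ZMod d × ZMod d) (ZMod d × ZMod d) ℂ := fun x y =>
      ∑ nm : ZMod d × ZMod d, (p nm : ℂ) * Φ nm x * (starRingEnd ℂ) (Φ nm y)
    let ρTB : Matrix (ZMod d × ZMod d) (ZMod d × ZMod d) ℂ := fun x y =>
      ρ (x.1, y.2) (y.1, x.2)
    ∃ v : ZMod d × ZMod d → ℂ, (star v ⬝ᵥ ρTB.mulVec v).re < 0 :=
  bell_diagonal_npt_general d p hsum hfid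
end
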